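/- arXiv:2110.08081 — 5 statements merged into one kernel-verified Lean document; each statement's English description precedes it below -/
import Mathlib

section
/- Let H be a complex Hilbert space, Q ∈ L(H) invertible with inverse R = Q⁻¹, and let Q₊ ∈ L(H) be a nonnegative selfadjoint operator with 0 ≤ Q₊ ≤ -Im(Q) (in the sense of quadratic forms). Then R* Q₊ R ≤ Im(R) and R Q₊ R* ≤ Im(R), where Im(T) = (T - T*)/(2i). -/
/-! Since `R = Q⁻¹`, conjugating by `R` turns `Im Q` into `-Im R`:
`R* (Im Q) R = -Im R = R (Im Q) R*`. So `Q₊ ≤ -Im Q`, evaluated at `R φ` and at `R* φ`,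
is exactly the claim. -/

open ContinuousLinearMap

section StarRing

variable {𝕜 A : Type*} [Semiring 𝕜] [Ring A] [StarRing A] [Module 𝕜 A]
  [IsScalarTower 𝕜 A A] [SMulCommClass 𝕜 A A]

theorem star_mul_smul_sub_star_mul_eq_neg {q r : A} (hqr : q * r = 1) (c : 𝕜) :
    star r * (c • (q - star q)) * r = -(c • (r - star r)) := by
  have hconj : star r * (q - star q) * r = star r - r := by
    rw [mul_sub, sub_mul, mul_assoc, hqr, mul_one, ← star_mul, hqr, star_one, one_mul]
  rw [mul_smul_comm, smul_mul_assoc, hconj, ← smul_neg, neg_sub]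

theorem mul_smul_sub_star_mul_star_eq_neg {q r : A} (hrq : r * q = 1) (c : 𝕜) :
    r * (c • (q - star q)) * star r = -(c • (r - star r)) := by
  have hconj : r * (q - star q) * star r = star r - r := by
    rw [mul_sub, sub_mul, hrq, one_mul, mul_assoc, ← star_mul, hrq, star_one, mul_one]
  rw [mul_smul_comm, smul_mul_assoc, hconj, ← smul_neg, neg_sub]

end StarRing

section Adjoint

variable {𝕜 E : Type*} [RCLike 𝕜] [NormedAddCommGroup E] [InnerProductSpace 𝕜 E]
  [CompleteSpace E]

theorem inner_adjoint_mul_mul_apply_self (R T : E →L[𝕜] E) (φ : E) :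
    inner 𝕜 ((adjoint R * T * R) φ) φ = inner 𝕜 (T (R φ)) (R φ) :=
  adjoint_inner_left R φ (T (R φ))

theorem inner_mul_mul_adjoint_apply_self (R T : E →L[𝕜] E) (φ : E) :
    inner 𝕜 ((R * T * adjoint R) φ) φ = inner 𝕜 (T (adjoint R φ)) (adjoint R φ) :=
  (adjoint_inner_right R (T (adjoint R φ)) φ).symm

end Adjoint

theorem stmt_1_general {H : Type*} [NormedAddCommGroup H] [InnerProductSpace ℂ H] [CompleteSpace H]
    (Q R Qp : H →L[ℂ] H)
    (hQR : Q.comp R = ContinuousLinearMap.id ℂ H)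
    (hRQ : R.comp Q = ContinuousLinearMap.id ℂ H)
    (hdom : ∀ φ : H, (inner ℂ (Qp φ) φ : ℂ).re ≤
      -(inner ℂ ((((2 * Complex.I)⁻¹ • (Q - ContinuousLinearMap.adjoint Q)) : H →L[ℂ] H) φ) φ
          : ℂ).re) :
    (∀ φ : H, (inner ℂ (Qp (R φ)) (R φ) : ℂ).re ≤
        (inner ℂ ((((2 * Complex.I)⁻¹ • (R - ContinuousLinearMap.adjoint R)) : H →L[ℂ] H) φ) φ
          : ℂ).re) ∧
    (∀ φ : H, (inner ℂ (Qp (ContinuousLinearMap.adjoint R φ)) (ContinuousLinearMap.adjoint R φ)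
          : ℂ).re ≤
        (inner ℂ ((((2 * Complex.I)⁻¹ • (R - ContinuousLinearMap.adjoint R)) : H →L[ℂ] H) φ) φ
          : ℂ).re) := by
  set c : ℂ := (2 * Complex.I)⁻¹
  have hR_right : adjoint R * (c • (Q - adjoint Q)) * R = -(c • (R - adjoint R)) :=
    star_mul_smul_sub_star_mul_eq_neg (hQR : Q * R = 1) c
  have hR_left : R * (c • (Q - adjoint Q)) * adjoint R = -(c • (R - adjoint R)) :=
    mul_smul_sub_star_mul_star_eq_neg (hRQ : R * Q = 1) c
  refine ⟨fun φ => (hdom (R φ)).trans_eq ?_, fun φ => (hdom (adjoint R φ)).trans_eq ?_⟩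
  · rw [← inner_adjoint_mul_mul_apply_self, hR_right, neg_apply, inner_neg_left,
      Complex.neg_re, neg_neg]
  · rw [← inner_mul_mul_adjoint_apply_self, hR_left, neg_apply, inner_neg_left,
      Complex.neg_re, neg_neg]

/-- quadratic estimates, Proposition 5.7. If `Q` is an invertible bounded
operator with inverse `R`, and `Q₊` is a nonnegative selfadjoint operator with
`0 ≤ Q₊ ≤ -Im Q` as quadratic forms, then `R* Q₊ R ≤ Im R` and `R Q₊ R* ≤ Im R`. -/
theorem stmt_1 {H : Type*} [NormedAddCommGroup H] [InnerProductSpace ℂ H] [CompleteSpace H]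
    (Q R Qp : H →L[ℂ] H)
    (hQR : Q.comp R = ContinuousLinearMap.id ℂ H)
    (hRQ : R.comp Q = ContinuousLinearMap.id ℂ H)
    (hsa : IsSelfAdjoint Qp)
    (hpos : ∀ φ : H, 0 ≤ (inner ℂ (Qp φ) φ : ℂ).re)
    (hdom : ∀ φ : H, (inner ℂ (Qp φ) φ : ℂ).re ≤
      -(inner ℂ ((((2 * Complex.I)⁻¹ • (Q - ContinuousLinearMap.adjoint Q)) : H →L[ℂ] H) φ) φ
          : ℂ).re) :
    (∀ φ : H, (inner ℂ (Qp (R φ)) (R φ) : ℂ).re ≤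
        (inner ℂ ((((2 * Complex.I)⁻¹ • (R - ContinuousLinearMap.adjoint R)) : H →L[ℂ] H) φ) φ
          : ℂ).re) ∧
    (∀ φ : H, (inner ℂ (Qp (ContinuousLinearMap.adjoint R φ)) (ContinuousLinearMap.adjoint R φ)
          : ℂ).re ≤
        (inner ℂ ((((2 * Complex.I)⁻¹ • (R - ContinuousLinearMap.adjoint R)) : H →L[ℂ] H) φ) φ
          : ℂ).re) :=
  stmt_1_general Q R Qp hQR hRQ hdom
end

section
/- Let A be a complex unital Banach algebra, let w ∈ A, and let z, r be nonzero complex scalars. Suppose R, S ∈ A satisfy the resolvent identity R - S = (z² + r²)·S·w·R. Define R^{[n]} = |z|^{2n}(Rw)^{n-1}R and S^{[m]} = r^{2m}(Sw)^{m-1}S (with |z| = r). Then for every n ≥ 1 and N ≥ n: R^{[n]} = Σ_{m=n}^{N} C(m-1, n-1)(1 + ẑ²)^{m-n} S^{[m]} + Σ_{ν=max(1, n-N)}^{n} C(N, n-ν)(1 + ẑ²)^{N-n+ν} S^{[N]} w R^{[ν]}, where ẑ = z/r and C(·,·) denotes binomial coefficients. -/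
/-!
Put `T = r²·S w`, `Y = r²·S` and `c = 1 + ẑ²`, so that `z² + r² = c r²`. The resolvent identity
`R = S + c r²·S w R` turns into the recursion `R^{[ν+1]} = T R^{[ν]} + c T R^{[ν+1]}`, with
`R^{[1]} = Y + c T R^{[1]}`. For the shifted sequence `X k = R^{[k+1]}` and the right shift `σ`
this reads `X = Y δ₀ + L X` with `L = T (c + σ)`, so `X = ∑_{i<N} Lⁱ (Y δ₀) + L^N X`. Left
multiplication by `T` commutes with `c` and `σ`, hence `L^N = T^N ∑_j C(N,j) c^{N-j} σ^j` by the
binomial theorem, and reading off the `k`-th entry gives the two sums.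
-/

open Finset

namespace ResolventExpansion

section Shift

variable {R M : Type*} [Semiring R] [AddCommMonoid M] [Module R M]

def seqShift : Module.End R (ℕ → M) where
  toFun f n := match n with
    | 0 => 0
    | n + 1 => f n
  map_add' f g := by ext (_ | n) <;> simp
  map_smul' a f := by ext (_ | n) <;> simp

@[simp] lemma seqShift_apply_zero (f : ℕ → M) : seqShift (R := R) f 0 = 0 := rfl

@[simp] lemma seqShift_apply_succ (f : ℕ → M) (n : ℕ) : seqShift (R := R) f (n + 1) = f n := rfl

lemma seqShift_pow_apply (j : ℕ) (f : ℕ → M) (n : ℕ) :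
    (seqShift (R := R) ^ j) f n = if j ≤ n then f (n - j) else 0 := by
  induction j generalizing n with
  | zero => simp
  | succ j ih =>
    rw [pow_succ', Module.End.mul_apply]
    rcases n with _ | n
    · simp
    · simp [ih, Nat.succ_sub_succ]

end Shift

lemma eq_sum_pow_add_pow_of_eq_add {R M : Type*} [Semiring R] [AddCommMonoid M] [Module R M]
    {L : Module.End R M} {x d : M} (h : x = d + L x) (N : ℕ) :
    x = ∑ i ∈ range N, (L ^ i) d + (L ^ N) x := by
  induction N with
  | zero => simp
  | succ N ih =>
    conv_lhs => rw [ih, h]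
    rw [map_add, sum_range_succ, pow_succ, Module.End.mul_apply, add_assoc]

section Step

variable {𝕜 A : Type*} [CommSemiring 𝕜] [Semiring A] [Algebra 𝕜 A]

/-- With `σ = seqShift`, the recursion `X (k + 1) = T * X k + c • (T * X (k + 1))`,
`X 0 = Y + c • (T * X 0)` says exactly that `X = Pi.single 0 Y + resolventStep c T X`. -/
def resolventStep (c : 𝕜) (T : A) : Module.End 𝕜 (ℕ → A) :=
  LinearMap.mulLeft 𝕜 (Function.const ℕ T) * (algebraMap 𝕜 _ c + seqShift)

lemma resolventStep_pow_apply (c : 𝕜) (T : A) (N : ℕ) (f : ℕ → A) (n : ℕ) :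
    (resolventStep c T ^ N) f n =
      ∑ j ∈ range (N + 1), (N.choose j * c ^ (N - j)) • (T ^ N * (seqShift (R := 𝕜) ^ j) f n) := by
  have hcomm : Commute (LinearMap.mulLeft 𝕜 (Function.const ℕ T)) (algebraMap 𝕜 _ c + seqShift) :=
    (Algebra.commute_algebraMap_right _ _).add_right <| by
      refine LinearMap.ext fun f => funext fun n => ?_
      rcases n with _ | n <;> simp
  rw [resolventStep, hcomm.mul_pow, LinearMap.pow_mulLeft, add_comm,
    (Algebra.commute_algebraMap_right c _).add_pow, Finset.mul_sum, LinearMap.sum_apply,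
    Finset.sum_apply]
  refine sum_congr rfl fun j _ => ?_
  simp only [Module.End.mul_apply, Module.End.natCast_apply, ← map_pow,
    Module.algebraMap_end_apply, map_nsmul, map_smul, LinearMap.mulLeft_apply, Pi.mul_apply,
    Pi.smul_apply, Pi.pow_apply, Function.const_apply]
  rw [mul_smul, Nat.cast_smul_eq_nsmul]

lemma resolventStep_pow_apply_of_le (c : 𝕜) (T : A) (N : ℕ) (f : ℕ → A) (k : ℕ) :
    (resolventStep c T ^ N) f k =
      ∑ j ∈ range (k + 1), (N.choose j * c ^ (N - j)) • (T ^ N * f (k - j)) := by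
  calc (resolventStep c T ^ N) f k
      = ∑ j ∈ range (N + 1), if j ∈ range (k + 1) then
          (N.choose j * c ^ (N - j)) • (T ^ N * f (k - j)) else 0 := by
        rw [resolventStep_pow_apply]
        refine sum_congr rfl fun j _ => ?_
        simp only [seqShift_pow_apply, mem_range, Nat.lt_succ_iff]
        split_ifs <;> simp
    _ = ∑ j ∈ range (k + 1), (N.choose j * c ^ (N - j)) • (T ^ N * f (k - j)) := by
        rw [sum_ite_mem]
        refine sum_subset inter_subset_right fun j hj hjN => ?_
        rw [Nat.choose_eq_zero_of_lt (by simp_all)]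
        simp

lemma resolventStep_pow_apply_single (c : 𝕜) (T Y : A) (i k : ℕ) :
    (resolventStep c T ^ i) (Pi.single 0 Y) k = (i.choose k * c ^ (i - k)) • (T ^ i * Y) := by
  rw [resolventStep_pow_apply_of_le, sum_range_succ, Nat.sub_self, Pi.single_eq_same,
    sum_eq_zero, zero_add]
  intro j hj
  rw [Pi.single_eq_of_ne (by simp at hj; omega), mul_zero, smul_zero]

theorem eq_sum_add_sum_of_recursion (c : 𝕜) (T Y : A) (X : ℕ → A)
    (h0 : X 0 = Y + c • (T * X 0)) (hsucc : ∀ k, X (k + 1) = T * X k + c • (T * X (k + 1)))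
    (k N : ℕ) :
    X k = ∑ i ∈ range N, (i.choose k * c ^ (i - k)) • (T ^ i * Y)
      + ∑ j ∈ range (k + 1), (N.choose j * c ^ (N - j)) • (T ^ N * X (k - j)) := by
  have hfix : X = Pi.single 0 Y + resolventStep c T X := by
    ext (_ | k)
    · simpa [resolventStep, mul_smul_comm] using h0
    · simpa [resolventStep, mul_add, mul_smul_comm, add_comm] using hsucc k
  conv_lhs => rw [eq_sum_pow_add_pow_of_eq_add hfix N]
  simp only [Pi.add_apply, Finset.sum_apply, resolventStep_pow_apply_single]
  rw [resolventStep_pow_apply_of_le]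

theorem eq_sum_Icc_add_sum_Icc_of_recursion (c : 𝕜) (T Y : A) (X : ℕ → A)
    (h1 : X 1 = Y + c • (T * X 1))
    (hsucc : ∀ ν, 1 ≤ ν → X (ν + 1) = T * X ν + c • (T * X (ν + 1))) {n N : ℕ}
    (hn : 1 ≤ n) (hnN : n ≤ N) :
    X n = ∑ m ∈ Icc n N, ((m - 1).choose (n - 1) * c ^ (m - n)) • (T ^ (m - 1) * Y)
      + ∑ ν ∈ Icc 1 n, (N.choose (n - ν) * c ^ (N - n + ν)) • (T ^ N * X ν) := by
  obtain ⟨k, rfl⟩ := Nat.exists_eq_add_of_le' hn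
  rw [eq_sum_add_sum_of_recursion c T Y (fun k => X (k + 1)) h1 (fun k => hsucc (k + 1) k.succ_pos)
    k N]
  congr 1
  · rw [← sum_subset (s₁ := Ico k N) (fun i hi => by simp only [mem_Ico, mem_range] at *; omega)
      fun i hi hi' => by
        simp only [mem_Ico, mem_range] at hi hi'
        rw [Nat.choose_eq_zero_of_lt (by omega), Nat.cast_zero, zero_mul, zero_smul]]
    refine sum_nbij' (· + 1) (· - 1) (fun i hi => by simp only [mem_Ico, mem_Icc] at *; omega)
      (fun m hm => by simp only [mem_Ico, mem_Icc] at *; omega) (fun i _ => rfl)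
      (fun m hm => by simp only [mem_Icc] at hm; omega) fun i _ => ?_
    simp
  · refine sum_nbij' (k + 1 - ·) (k + 1 - ·)
      (fun j hj => by simp only [mem_range, mem_Icc] at *; omega)
      (fun ν hν => by simp only [mem_range, mem_Icc] at *; omega)
      (fun j hj => by simp only [mem_range] at hj; omega)
      (fun ν hν => by simp only [mem_Icc] at hν; omega) fun j hj => ?_
    simp only [mem_range] at hj
    congr 4 <;> omega

end Step

section ResolventPower

variable {𝕜 A : Type*} [CommSemiring 𝕜] [Semiring A] [Algebra 𝕜 A]

/-- `resolventPower (|z| ^ 2) R w n` is the paper's `R^{[n]} = |z|^{2n} (R w)^{n-1} R`. -/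
def resolventPower (a : 𝕜) (P w : A) (n : ℕ) : A := a ^ n • ((P * w) ^ (n - 1) * P)

variable {a : 𝕜} {P w : A} {n : ℕ}

lemma resolventPower_one : resolventPower a P w 1 = a • P := by simp [resolventPower]

lemma resolventPower_succ (hn : 1 ≤ n) :
    resolventPower a P w (n + 1) = a • (P * w) * resolventPower a P w n := by
  obtain ⟨k, rfl⟩ := Nat.exists_eq_add_of_le' hn
  simp only [resolventPower, smul_mul_smul, Nat.add_sub_cancel, pow_succ' (P * w) k, mul_assoc,
    pow_succ' a (k + 1)]

lemma resolventPower_eq_pow_mul (hn : 1 ≤ n) :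
    resolventPower a P w n = (a • (P * w)) ^ (n - 1) * (a • P) := by
  obtain ⟨k, rfl⟩ := Nat.exists_eq_add_of_le' hn
  simp only [resolventPower, smul_pow, smul_mul_smul, Nat.add_sub_cancel, pow_succ]

lemma resolventPower_mul (hn : 1 ≤ n) : resolventPower a P w n * w = (a • (P * w)) ^ n := by
  obtain ⟨k, rfl⟩ := Nat.exists_eq_add_of_le' hn
  rw [resolventPower, Nat.add_sub_cancel, smul_mul_assoc, mul_assoc, ← pow_succ, smul_pow]

variable {c : 𝕜} {R S : A}

lemma resolventPower_succ_eq (h : a • R = a • S + c • (a • (S * w) * (a • R))) (hn : 1 ≤ n) :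
    resolventPower a R w (n + 1) =
      a • (S * w) * resolventPower a R w n + c • (a • (S * w) * resolventPower a R w (n + 1)) := by
  have hmul (Q : A) : (a • R) * Q = (a • S) * Q + c • (a • (S * w) * ((a • R) * Q)) := by
    conv_lhs => rw [h]
    simp only [add_mul, smul_mul_assoc, mul_assoc]
  simpa only [resolventPower_succ hn, smul_mul_assoc, mul_assoc] using
    hmul (w * resolventPower a R w n)

end ResolventPower

end ResolventExpansion

open ResolventExpansion

theorem stmt_5_general {A : Type*} [NormedRing A] [NormedAlgebra ℂ A] (w R S : A) (z r : ℂ)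
    (hr : r ≠ 0) (hzr : (‖z‖ : ℂ) = r)
    (hres : R - S = (z ^ 2 + r ^ 2) • (S * (w * R)))
    (Rn Sn : ℕ → A)
    (hRn : ∀ n : ℕ, Rn n = ((‖z‖ : ℂ) ^ (2 * n)) • ((R * w) ^ (n - 1) * R))
    (hSn : ∀ m : ℕ, Sn m = (r ^ (2 * m)) • ((S * w) ^ (m - 1) * S)) :
    ∀ n N : ℕ, 1 ≤ n → n ≤ N →
      Rn n =
        (∑ m ∈ Finset.Icc n N,
            ((Nat.choose (m - 1) (n - 1) : ℂ) * (1 + (z / r) ^ 2) ^ (m - n)) • Sn m)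
          + ∑ ν ∈ Finset.Icc (max 1 (n - N)) n,
            ((Nat.choose N (n - ν) : ℂ) * (1 + (z / r) ^ 2) ^ (N - n + ν)) •
              (Sn N * w * Rn ν) := by
  intro n N hn hnN
  set c := 1 + (z / r) ^ 2 with hc
  have hRS : r ^ 2 • R = r ^ 2 • S + c • (r ^ 2 • (S * w) * (r ^ 2 • R)) := by
    have hcr : z ^ 2 + r ^ 2 = c * r ^ 2 := by
      rw [hc]
      field_simp
      ring
    conv_lhs => rw [sub_eq_iff_eq_add'.mp hres, hcr]
    simp only [smul_add, smul_mul_smul, smul_smul, mul_assoc]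
    match_scalars <;> ring
  obtain rfl : Rn = resolventPower (r ^ 2) R w :=
    funext fun n => by rw [hRn, hzr, resolventPower, ← pow_mul]
  obtain rfl : Sn = resolventPower (r ^ 2) S w :=
    funext fun m => by rw [hSn, resolventPower, ← pow_mul]
  rw [max_eq_left (by omega)]
  refine (eq_sum_Icc_add_sum_Icc_of_recursion c _ _ _
    (by rwa [resolventPower_one]) (fun ν => resolventPower_succ_eq hRS) hn hnN).trans ?_
  congr 1
  · refine sum_congr rfl fun m hm => ?_
    rw [resolventPower_eq_pow_mul (hn.trans (mem_Icc.mp hm).1)]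
  · refine sum_congr rfl fun ν _ => ?_
    rw [resolventPower_mul (hn.trans hnN)]

/-- combinatorial resolvent expansion (2.19)–(2.20). In a complex unital
Banach algebra, if `R - S = (z² + r²) S w R` with `r = |z|`, and
`R^{[n]} = |z|^{2n} (Rw)^{n-1} R`, `S^{[m]} = r^{2m} (Sw)^{m-1} S`, then for `1 ≤ n ≤ N`:
`R^{[n]} = Σ_{m=n}^N C(m-1,n-1)(1+ẑ²)^{m-n} S^{[m]}
  + Σ_{ν=max(1,n-N)}^n C(N,n-ν)(1+ẑ²)^{N-n+ν} S^{[N]} w R^{[ν]}` where `ẑ = z/r`. -/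
theorem stmt_5 {A : Type*} [NormedRing A] [NormedAlgebra ℂ A] (w R S : A) (z r : ℂ)
    (hz : z ≠ 0) (hr : r ≠ 0) (hzr : (‖z‖ : ℂ) = r)
    (hres : R - S = (z ^ 2 + r ^ 2) • (S * (w * R)))
    (Rn Sn : ℕ → A)
    (hRn : ∀ n : ℕ, Rn n = ((‖z‖ : ℂ) ^ (2 * n)) • ((R * w) ^ (n - 1) * R))
    (hSn : ∀ m : ℕ, Sn m = (r ^ (2 * m)) • ((S * w) ^ (m - 1) * S)) :
    ∀ n N : ℕ, 1 ≤ n → n ≤ N →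
      Rn n =
        (∑ m ∈ Finset.Icc n N,
            ((Nat.choose (m - 1) (n - 1) : ℂ) * (1 + (z / r) ^ 2) ^ (m - n)) • Sn m)
          + ∑ ν ∈ Finset.Icc (max 1 (n - N)) n,
            ((Nat.choose N (n - ν) : ℂ) * (1 + (z / r) ^ 2) ^ (N - n + ν)) •
              (Sn N * w * Rn ν) :=
  stmt_5_general w R S z r hr hzr hres Rn Sn hRn hSn
end

section
/- Let A be a complex unital Banach algebra and let Q, w, Q₀ ∈ A with Q and Q₀ invertible, R = Q⁻¹, R₀ = Q₀⁻¹. For n ≥ 1 set T^{[n]} = (Rw)^{n-1}R and T₀^{[n]} = R₀ⁿ. Then for all n ≥ 1: T^{[n]} - T₀^{[n]} = Σ_{k=1}^{n-1} T^{[n-k]}(w - 1)T₀^{[k]} - Σ_{k=1}^{n} T^{[n-k+1]}(Q - Q₀)T₀^{[k]}. -/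
/-!
With `a = R w`, both sides satisfy the recursion `X_{n+1} = a X_n + R (w - 1) R₀ⁿ - R (Q - Q₀) R₀ⁿ⁺¹`:
for the left side this is `a R₀ⁿ - R₀ⁿ⁺¹ = R (w - 1) R₀ⁿ + (R - R₀) R₀ⁿ` together with the resolvent
identity `R (Q - Q₀) R₀ = R₀ - R`, and for the sums it is Horner's scheme.
-/

open Finset

section

variable {A : Type*} [Ring A]

theorem sum_Icc_pow_sub_mul_succ (a : A) (f : ℕ → A) (n : ℕ) :
    ∑ k ∈ Icc 1 (n + 1), a ^ (n + 1 - k) * f k =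
      a * ∑ k ∈ Icc 1 n, a ^ (n - k) * f k + f (n + 1) := by
  rw [sum_Icc_succ_top (Nat.le_add_left 1 n), Nat.sub_self, pow_zero, one_mul, mul_sum]
  congr 1
  refine sum_congr rfl fun k hk => ?_
  rw [Nat.sub_add_comm (mem_Icc.mp hk).2, pow_succ', mul_assoc]

theorem mul_sub_mul_eq_sub_of_mul_eq_one {Q Q₀ R R₀ : A} (hRQ : R * Q = 1) (hQR₀ : Q₀ * R₀ = 1) :
    R * (Q - Q₀) * R₀ = R₀ - R := by
  rw [mul_sub, sub_mul, hRQ, one_mul, mul_assoc, hQR₀, mul_one]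

theorem pow_mul_sub_pow_eq_sum_sub_sum {Q Q₀ R R₀ : A} (w : A) (hRQ : R * Q = 1)
    (hQR₀ : Q₀ * R₀ = 1) (n : ℕ) :
    (R * w) ^ n * R - R₀ ^ (n + 1) =
      ∑ k ∈ Icc 1 n, (R * w) ^ (n - k) * (R * (w - 1) * R₀ ^ k)
        - ∑ k ∈ Icc 1 (n + 1), (R * w) ^ (n + 1 - k) * (R * (Q - Q₀) * R₀ ^ k) := by
  have hres := mul_sub_mul_eq_sub_of_mul_eq_one hRQ hQR₀
  induction n with
  | zero => simp [hres]
  | succ n ih =>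
    have hstep : R * (w - 1) * R₀ ^ (n + 1) - R * (Q - Q₀) * R₀ ^ (n + 1 + 1) =
        R * w * R₀ ^ (n + 1) - R₀ ^ (n + 1 + 1) := by
      rw [pow_succ' R₀ (n + 1), ← mul_assoc, hres, mul_sub_one, sub_mul, sub_mul]
      abel
    rw [sum_Icc_pow_sub_mul_succ, sum_Icc_pow_sub_mul_succ, add_sub_add_comm, ← mul_sub, ← ih,
      hstep, mul_sub, ← mul_assoc, ← pow_succ']
    abel

end

theorem stmt_6_general {A : Type*} [NormedRing A] (Q Q₀ w R R₀ : A)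
    (h2 : R * Q = 1) (h3 : Q₀ * R₀ = 1) :
    ∀ n : ℕ, 1 ≤ n →
      (R * w) ^ (n - 1) * R - R₀ ^ n =
        (∑ k ∈ Finset.Icc 1 (n - 1), (R * w) ^ (n - k - 1) * R * (w - 1) * R₀ ^ k)
          - ∑ k ∈ Finset.Icc 1 n, (R * w) ^ (n - k) * R * (Q - Q₀) * R₀ ^ k := by
  intro n hn
  obtain ⟨m, rfl⟩ := Nat.exists_eq_add_of_le' hn
  simpa only [Nat.add_sub_cancel, Nat.sub_right_comm (m + 1) _ 1, mul_assoc] using pow_mul_sub_pow_eq_sum_sub_sum w h2 h3 m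

/-- abstract Lemma 2.1. In a complex unital Banach algebra, with `R = Q⁻¹`,
`R₀ = Q₀⁻¹`, `T^{[n]} = (Rw)^{n-1}R` and `T₀^{[n]} = R₀ⁿ`, one has for every `n ≥ 1`:
`T^{[n]} - T₀^{[n]} = Σ_{k=1}^{n-1} T^{[n-k]}(w-1)T₀^{[k]} - Σ_{k=1}^n T^{[n-k+1]}(Q-Q₀)T₀^{[k]}`. -/
theorem stmt_6 {A : Type*} [NormedRing A] [NormedAlgebra ℂ A] (Q Q₀ w R R₀ : A)
    (h1 : Q * R = 1) (h2 : R * Q = 1) (h3 : Q₀ * R₀ = 1) (h4 : R₀ * Q₀ = 1) :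
    ∀ n : ℕ, 1 ≤ n →
      (R * w) ^ (n - 1) * R - R₀ ^ n =
        (∑ k ∈ Finset.Icc 1 (n - 1), (R * w) ^ (n - k - 1) * R * (w - 1) * R₀ ^ k)
          - ∑ k ∈ Finset.Icc 1 n, (R * w) ^ (n - k) * R * (Q - Q₀) * R₀ ^ k :=
  stmt_6_general Q Q₀ w R R₀ h2 h3
end

section
/- Let δ ∈ (1/2, 1]. Let (aₙ)_{n∈ℕ} and (bₘ)_{m∈ℕ} be nonnegative sequences in ℓ². Then Σ_{n∈ℕ} ⟨n⟩^{-δ} aₙ (Σ_{m=0}^{n} ⟨m+1⟩^{δ-1} bₘ) ≤ C ‖a‖_{ℓ²} ‖b‖_{ℓ²} for a constant C depending only on δ, where ⟨n⟩ = (1 + n²)^{1/2}. -/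
/-!
Comparing `⟨x⟩ = (1 + x²)^{1/2}` with `x + 1` reduces the estimate, up to the factor
`2^{δ/2} 2^{|δ-1|/2}`, to the `ℓ²` boundedness of the weighted Hardy operator
`(H b)ₙ = (n+1)^{-δ} ∑_{m ≤ n} (m+1)^{δ-1} bₘ`. This is a Schur test with the weights `(m+1)^ε`,
`ε = δ - 1/2 > 0`: Cauchy–Schwarz in the inner sum, where `∑_{m ≤ n} (m+1)^{δ-3/2} ≲ (n+1)^ε`, gives
`(H b)ₙ² ≲ (n+1)^{-1-ε} ∑_{m ≤ n} (m+1)^ε bₘ²`, and exchanging the order of summation with the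
tail bound `∑_{n ≥ m} (n+1)^{-1-ε} ≲ (m+1)^{-ε}` gives `‖H b‖ ≲ ‖b‖`. Both power sums are compared
with integrals.
-/

open Finset Real

lemma sq_rpow_div_two {x : ℝ} (hx : 0 ≤ x) (s : ℝ) : (x ^ 2) ^ (s / 2) = x ^ s := by
  rw [← rpow_natCast, ← rpow_mul hx]
  congr 1
  push_cast
  ring

lemma sum_range_rpow_le {p : ℝ} (hp : -1 < p) (N : ℕ) :
    ∑ m ∈ range N, ((m : ℝ) + 1) ^ p ≤ (1 + 1 / (p + 1)) * (N : ℝ) ^ (p + 1) := by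
  have hp1 : 0 < p + 1 := by linarith
  rw [add_mul, one_mul, one_div_mul_eq_div]
  rcases le_total 0 p with hp0 | hp0
  · calc ∑ m ∈ range N, ((m : ℝ) + 1) ^ p ≤ (range N).card • (N : ℝ) ^ p := by
          refine sum_le_card_nsmul _ _ _ fun m hm => rpow_le_rpow (by positivity) ?_ hp0
          exact_mod_cast mem_range.mp hm
      _ = (N : ℝ) ^ (p + 1) := by
          rw [card_range, nsmul_eq_mul, rpow_add_one' N.cast_nonneg hp1.ne', mul_comm]
      _ ≤ _ := le_add_of_nonneg_right (by positivity)
  obtain rfl | hN := Nat.eq_zero_or_pos N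
  · simp only [range_zero, sum_empty]
    positivity
  have hanti : AntitoneOn (fun x : ℝ => x ^ p) (Set.Icc ((1 : ℕ) : ℝ) N) :=
    fun x hx y _ hxy => rpow_le_rpow_of_nonpos (by norm_num at hx; linarith [hx.1]) hxy hp0
  have hint := hanti.sum_le_integral_Ico hN
  rw [integral_rpow (Or.inl hp)] at hint
  have hN1 : (1 : ℝ) ≤ (N : ℝ) ^ (p + 1) := one_le_rpow (by exact_mod_cast hN) hp1.le
  have htail : ((N : ℝ) ^ (p + 1) - 1) / (p + 1) ≤ (N : ℝ) ^ (p + 1) / (p + 1) := by gcongr; linarith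
  rw [range_eq_Ico, sum_eq_sum_Ico_succ_bot hN]
  push_cast at hint ⊢
  norm_num at hint ⊢
  linarith

lemma sum_Ico_rpow_le {ε : ℝ} (hε : 0 < ε) (m M : ℕ) :
    ∑ n ∈ Ico m M, ((n : ℝ) + 1) ^ (-1 - ε) ≤ (1 + 1 / ε) * ((m : ℝ) + 1) ^ (-ε) := by
  have hm : 0 < (m : ℝ) + 1 := by positivity
  rw [add_mul, one_mul, one_div_mul_eq_div]
  rcases le_or_gt M m with hMm | hmM
  · rw [Ico_eq_empty_of_le hMm, sum_empty]
    positivity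
  have hanti : AntitoneOn (fun x : ℝ => x ^ (-1 - ε)) (Set.Icc ((m + 1 : ℕ) : ℝ) M) :=
    fun x hx y _ hxy =>
      rpow_le_rpow_of_nonpos (by push_cast at hx; linarith [hx.1]) hxy (by linarith)
  have hint := hanti.sum_le_integral_Ico hmM
  have h0 : (0 : ℝ) ∉ Set.uIcc ((m + 1 : ℕ) : ℝ) M :=
    Set.notMem_uIcc_of_lt (by positivity) (by exact_mod_cast m.succ_pos.trans_le hmM)
  rw [integral_rpow (Or.inr ⟨by linarith, h0⟩), show -1 - ε + 1 = -ε by ring, div_neg,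
    ← neg_div, neg_sub] at hint
  have hfirst : ((m : ℝ) + 1) ^ (-1 - ε) ≤ ((m : ℝ) + 1) ^ (-ε) :=
    rpow_le_rpow_of_exponent_le (by linarith) (by linarith)
  have htail : (((m + 1 : ℕ) : ℝ) ^ (-ε) - (M : ℝ) ^ (-ε)) / ε ≤ ((m : ℝ) + 1) ^ (-ε) / ε := by
    gcongr
    push_cast
    linarith [rpow_nonneg M.cast_nonneg (-ε)]
  rw [sum_eq_sum_Ico_succ_bot hmM]
  push_cast at hint htail
  linarith

lemma one_add_sq_rpow_div_two_le {x : ℝ} (hx : 1 ≤ x) (s : ℝ) :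
    (1 + x ^ 2) ^ (s / 2) ≤ 2 ^ (|s| / 2) * x ^ s := by
  have hx2 : 0 < x ^ 2 := by positivity
  rcases le_total 0 s with hs | hs
  · calc (1 + x ^ 2) ^ (s / 2) ≤ (2 * x ^ 2) ^ (s / 2) := by
          gcongr
          nlinarith
      _ = 2 ^ (|s| / 2) * x ^ s := by
          rw [mul_rpow zero_le_two hx2.le, sq_rpow_div_two (by linarith), abs_of_nonneg hs]
  · calc (1 + x ^ 2) ^ (s / 2) ≤ (x ^ 2) ^ (s / 2) :=
          rpow_le_rpow_of_nonpos hx2 (by linarith) (by linarith)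
      _ = x ^ s := sq_rpow_div_two (by linarith) s
      _ ≤ 2 ^ (|s| / 2) * x ^ s :=
          le_mul_of_one_le_left (by positivity) (one_le_rpow one_le_two (by positivity))

lemma one_add_sq_rpow_neg_div_two_le {x : ℝ} (hx : 0 ≤ x) {s : ℝ} (hs : 0 ≤ s) :
    (1 + x ^ 2) ^ (-(s / 2)) ≤ 2 ^ (s / 2) * (x + 1) ^ (-s) := by
  have hx1 : 0 < (x + 1) ^ 2 := by positivity
  calc (1 + x ^ 2) ^ (-(s / 2)) = ((1 + x ^ 2)⁻¹) ^ (s / 2) := by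
        rw [rpow_neg (by positivity), inv_rpow (by positivity)]
    _ ≤ (2 * ((x + 1) ^ 2)⁻¹) ^ (s / 2) := by
        gcongr
        rw [← div_eq_mul_inv, inv_eq_one_div, div_le_div_iff₀ (by positivity) hx1]
        nlinarith [sq_nonneg (x - 1)]
    _ = 2 ^ (s / 2) * (x + 1) ^ (-s) := by
        rw [mul_rpow zero_le_two (by positivity), inv_rpow hx1.le, sq_rpow_div_two (by linarith),
          rpow_neg (by linarith)]

noncomputable def weightedHardy (δ : ℝ) (b : ℕ → ℝ) (n : ℕ) : ℝ :=
  ((n : ℝ) + 1) ^ (-δ) * ∑ m ∈ range (n + 1), ((m : ℝ) + 1) ^ (δ - 1) * b m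

lemma sq_sum_range_rpow_mul_le {δ : ℝ} (hδ : 1 / 2 < δ) (b : ℕ → ℝ) (n : ℕ) :
    (∑ m ∈ range (n + 1), ((m : ℝ) + 1) ^ (δ - 1) * b m) ^ 2 ≤
      (1 + 1 / (δ - 1 / 2)) * ((n : ℝ) + 1) ^ (δ - 1 / 2) *
        ∑ m ∈ range (n + 1), ((m : ℝ) + 1) ^ (δ - 1 / 2) * b m ^ 2 := by
  have hcs := sum_sq_le_sum_mul_sum_of_sq_le_mul (range (n + 1))
    (r := fun m => ((m : ℝ) + 1) ^ (δ - 1) * b m) (f := fun m => ((m : ℝ) + 1) ^ (δ - 3 / 2))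
    (g := fun m => ((m : ℝ) + 1) ^ (δ - 1 / 2) * b m ^ 2)
    (fun m _ => by positivity) (fun m _ => by positivity) fun m _ => le_of_eq <| by
      rw [mul_pow, ← rpow_mul_natCast (by positivity), ← mul_assoc, ← rpow_add (by positivity)]
      ring_nf
  have hf : ∑ m ∈ range (n + 1), ((m : ℝ) + 1) ^ (δ - 3 / 2)
      ≤ (1 + 1 / (δ - 1 / 2)) * ((n : ℝ) + 1) ^ (δ - 1 / 2) := by
    have := sum_range_rpow_le (p := δ - 3 / 2) (by linarith) (n + 1)
    rw [show δ - 3 / 2 + 1 = δ - 1 / 2 by ring] at this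
    exact_mod_cast this
  exact hcs.trans (mul_le_mul_of_nonneg_right hf (sum_nonneg fun m _ => by positivity))

lemma sum_range_rpow_mul_sum_range_le {ε : ℝ} (hε : 0 < ε) {c : ℕ → ℝ} (hc : ∀ m, 0 ≤ c m)
    (M : ℕ) :
    ∑ n ∈ range M, ((n : ℝ) + 1) ^ (-1 - ε) * ∑ m ∈ range (n + 1), ((m : ℝ) + 1) ^ ε * c m ≤
      (1 + 1 / ε) * ∑ m ∈ range M, c m := by
  simp only [mul_sum, range_eq_Ico]
  rw [← sum_Ico_Ico_comm]
  refine sum_le_sum fun m _ => ?_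
  have hm : 0 < (m : ℝ) + 1 := by positivity
  calc ∑ n ∈ Ico m M, ((n : ℝ) + 1) ^ (-1 - ε) * (((m : ℝ) + 1) ^ ε * c m)
      = (∑ n ∈ Ico m M, ((n : ℝ) + 1) ^ (-1 - ε)) * (((m : ℝ) + 1) ^ ε * c m) := by
        rw [sum_mul]
    _ ≤ (1 + 1 / ε) * ((m : ℝ) + 1) ^ (-ε) * (((m : ℝ) + 1) ^ ε * c m) := by
        gcongr
        · exact mul_nonneg (by positivity) (hc m)
        · exact sum_Ico_rpow_le hε m M
    _ = (1 + 1 / ε) * c m := by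
        rw [mul_assoc, ← mul_assoc (_ ^ (-ε)), ← rpow_add hm, neg_add_cancel, rpow_zero, one_mul]

lemma sum_range_sq_weightedHardy_le {δ : ℝ} (hδ : 1 / 2 < δ) (b : ℕ → ℝ) (M : ℕ) :
    ∑ n ∈ range M, weightedHardy δ b n ^ 2 ≤
      (1 + 1 / (δ - 1 / 2)) ^ 2 * ∑ n ∈ range M, b n ^ 2 := by
  set K := 1 + 1 / (δ - 1 / 2)
  calc ∑ n ∈ range M, weightedHardy δ b n ^ 2
      ≤ ∑ n ∈ range M, (((n : ℝ) + 1) ^ (-δ)) ^ 2 * (K * ((n : ℝ) + 1) ^ (δ - 1 / 2) *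
          ∑ m ∈ range (n + 1), ((m : ℝ) + 1) ^ (δ - 1 / 2) * b m ^ 2) := by
        refine sum_le_sum fun n _ => ?_
        rw [weightedHardy, mul_pow]
        gcongr
        exact sq_sum_range_rpow_mul_le hδ b n
    _ = K * ∑ n ∈ range M, ((n : ℝ) + 1) ^ (-1 - (δ - 1 / 2)) *
          ∑ m ∈ range (n + 1), ((m : ℝ) + 1) ^ (δ - 1 / 2) * b m ^ 2 := by
        rw [mul_sum]
        refine sum_congr rfl fun n _ => ?_
        have hexp : -1 - (δ - 1 / 2) = -δ * (2 : ℕ) + (δ - 1 / 2) := by push_cast; ring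
        rw [← rpow_mul_natCast (by positivity), hexp, rpow_add (by positivity)]
        ring
    _ ≤ K * (K * ∑ n ∈ range M, b n ^ 2) := by
        gcongr
        exact sum_range_rpow_mul_sum_range_le (by linarith) (fun m => sq_nonneg (b m)) M
    _ = K ^ 2 * ∑ n ∈ range M, b n ^ 2 := by ring

lemma sum_mul_weightedHardy_le {δ : ℝ} (hδ : 1 / 2 < δ) (a b : ℕ → ℝ) (M : ℕ) :
    ∑ n ∈ range M, a n * weightedHardy δ b n ≤
      (1 + 1 / (δ - 1 / 2)) * √(∑ n ∈ range M, a n ^ 2) * √(∑ n ∈ range M, b n ^ 2) := by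
  have hK : 0 ≤ 1 + 1 / (δ - 1 / 2) := by linarith [one_div_pos.mpr (sub_pos.mpr hδ)]
  calc ∑ n ∈ range M, a n * weightedHardy δ b n
      ≤ √(∑ n ∈ range M, a n ^ 2) * √(∑ n ∈ range M, weightedHardy δ b n ^ 2) :=
        sum_mul_le_sqrt_mul_sqrt _ _ _
    _ ≤ √(∑ n ∈ range M, a n ^ 2) *
          √((1 + 1 / (δ - 1 / 2)) ^ 2 * ∑ n ∈ range M, b n ^ 2) := by
        gcongr
        exact sum_range_sq_weightedHardy_le hδ b M
    _ = _ := by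
        rw [sqrt_mul (sq_nonneg _), sqrt_sq hK]
        ring

lemma one_add_sq_rpow_mul_sum_le_weightedHardy {δ : ℝ} (hδ : 0 ≤ δ) {a b : ℕ → ℝ}
    (ha : ∀ n, 0 ≤ a n) (hb : ∀ n, 0 ≤ b n) (n : ℕ) :
    (1 + (n : ℝ) ^ 2) ^ (-(δ / 2)) * a n *
        ∑ m ∈ range (n + 1), (1 + ((m : ℝ) + 1) ^ 2) ^ ((δ - 1) / 2) * b m ≤
      2 ^ (δ / 2) * 2 ^ (|δ - 1| / 2) * (a n * weightedHardy δ b n) := by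
  have hinner : ∑ m ∈ range (n + 1), (1 + ((m : ℝ) + 1) ^ 2) ^ ((δ - 1) / 2) * b m ≤
      2 ^ (|δ - 1| / 2) * ∑ m ∈ range (n + 1), ((m : ℝ) + 1) ^ (δ - 1) * b m := by
    rw [mul_sum]
    refine sum_le_sum fun m _ => ?_
    rw [← mul_assoc]
    gcongr
    · exact hb m
    · exact one_add_sq_rpow_div_two_le (by linarith [m.cast_nonneg (α := ℝ)]) _
  calc (1 + (n : ℝ) ^ 2) ^ (-(δ / 2)) * a n *
        ∑ m ∈ range (n + 1), (1 + ((m : ℝ) + 1) ^ 2) ^ ((δ - 1) / 2) * b m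
      ≤ 2 ^ (δ / 2) * ((n : ℝ) + 1) ^ (-δ) * a n *
          (2 ^ (|δ - 1| / 2) * ∑ m ∈ range (n + 1), ((m : ℝ) + 1) ^ (δ - 1) * b m) := by
        gcongr
        · exact sum_nonneg fun m _ => mul_nonneg (by positivity) (hb m)
        · exact mul_nonneg (by positivity) (ha n)
        · exact ha n
        · exact one_add_sq_rpow_neg_div_two_le n.cast_nonneg hδ
    _ = 2 ^ (δ / 2) * 2 ^ (|δ - 1| / 2) * (a n * weightedHardy δ b n) := by
        rw [weightedHardy]
        ring

theorem stmt_10_general (δ : ℝ) (hδ1 : 1 / 2 < δ) :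
    ∃ C : ℝ, 0 < C ∧ ∀ a b : ℕ → ℝ, (∀ n, 0 ≤ a n) → (∀ n, 0 ≤ b n) →
      Summable (fun n => a n ^ 2) → Summable (fun n => b n ^ 2) →
      ∀ M : ℕ,
        (∑ n ∈ Finset.range M,
          (1 + (n : ℝ) ^ 2) ^ (-(δ / 2)) * a n *
            ∑ m ∈ Finset.range (n + 1), (1 + ((m : ℝ) + 1) ^ 2) ^ ((δ - 1) / 2) * b m)
          ≤ C * Real.sqrt (∑' n, a n ^ 2) * Real.sqrt (∑' n, b n ^ 2) := by
  have hK : 0 < 1 + 1 / (δ - 1 / 2) := by linarith [one_div_pos.mpr (sub_pos.mpr hδ1)]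
  refine ⟨2 ^ (δ / 2) * 2 ^ (|δ - 1| / 2) * (1 + 1 / (δ - 1 / 2)), by positivity, ?_⟩
  intro a b ha hb hsa hsb M
  calc _ ≤ ∑ n ∈ range M, 2 ^ (δ / 2) * 2 ^ (|δ - 1| / 2) * (a n * weightedHardy δ b n) :=
        sum_le_sum fun n _ => one_add_sq_rpow_mul_sum_le_weightedHardy (by linarith) ha hb n
    _ ≤ 2 ^ (δ / 2) * 2 ^ (|δ - 1| / 2) *
          ((1 + 1 / (δ - 1 / 2)) * √(∑ n ∈ range M, a n ^ 2) * √(∑ n ∈ range M, b n ^ 2)) := by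
        rw [← mul_sum]
        gcongr
        exact sum_mul_weightedHardy_le hδ1 a b M
    _ ≤ 2 ^ (δ / 2) * 2 ^ (|δ - 1| / 2) *
          ((1 + 1 / (δ - 1 / 2)) * √(∑' n, a n ^ 2) * √(∑' n, b n ^ 2)) := by
        gcongr
        · exact hsa.sum_le_tsum _ fun n _ => sq_nonneg (a n)
        · exact hsb.sum_le_tsum _ fun n _ => sq_nonneg (b n)
    _ = _ := by ring

/-- discrete Schur-type estimate, step (5.44). For `δ ∈ (1/2,1]` there is a
constant `C = C(δ)` such that for all nonnegative `ℓ²` sequences `a, b`: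
`Σₙ ⟨n⟩^{-δ} aₙ (Σ_{m≤n} ⟨m+1⟩^{δ-1} bₘ) ≤ C ‖a‖_{ℓ²} ‖b‖_{ℓ²}`. -/
theorem stmt_10 (δ : ℝ) (hδ1 : 1 / 2 < δ) (hδ2 : δ ≤ 1) :
    ∃ C : ℝ, 0 < C ∧ ∀ a b : ℕ → ℝ, (∀ n, 0 ≤ a n) → (∀ n, 0 ≤ b n) →
      Summable (fun n => a n ^ 2) → Summable (fun n => b n ^ 2) →
      ∀ M : ℕ,
        (∑ n ∈ Finset.range M,
          (1 + (n : ℝ) ^ 2) ^ (-(δ / 2)) * a n *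
            ∑ m ∈ Finset.range (n + 1), (1 + ((m : ℝ) + 1) ^ 2) ^ ((δ - 1) / 2) * b m)
          ≤ C * Real.sqrt (∑' n, a n ^ 2) * Real.sqrt (∑' n, b n ^ 2) :=
  stmt_10_general δ hδ1
end

section
/- Let H be a Hilbert space, A a selfadjoint operator on H with form domain issues ignored (A bounded suffices), and suppose F : (0, ε₀] → L(H) is a C¹ family of bounded operators satisfying ‖F(ε)‖ ≤ C/ε and ‖F'(ε)‖ ≤ C(ε^{δ-1} + ε^{-1/2}‖F(ε)‖ + ε^{δ-3/2}‖F(ε)‖^{1/2}) for all ε ∈ (0, ε₀], where δ ∈ (1/2, 1] and C > 0. Then sup_{ε ∈ (0, ε₀]} ‖F(ε)‖ < ∞, with a bound depending only on C, δ, ε₀. -/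
/-!
If `‖F s‖ ≤ K s^(-α)` on `(0, ε₀]` with `α ≥ 0`, the right side of the differential inequality
is `O(s^q)` for every `q ≤ δ - 3/2 - α`. Integrating `F'` from `ε` to `ε₀` then improves the
exponent to `α - θ` for any `0 < θ ≤ δ - 1/2`, with a constant depending only on `C, δ, ε₀, K, α`.
Starting from the a priori bound (`α = 1`) and stepping down by `θ = (δ - 1/2)/2`, finitely many
steps reach `α = θ < δ - 1/2`, where `F'` is integrable at `0` and `‖F‖` is bounded.
-/

open Set Real

section

variable {E : Type*} [NormedAddCommGroup E] [NormedSpace ℝ E]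

theorem norm_sub_le_of_norm_deriv_le_rpow {F F' : ℝ → E} {a b A p : ℝ} (ha : 0 < a)
    (hab : a ≤ b) (hp : p ≠ 0) (hF : ∀ x ∈ Icc a b, HasDerivAt F (F' x) x)
    (hF' : ∀ x ∈ Icc a b, ‖F' x‖ ≤ A * x ^ (p - 1)) :
    ‖F b - F a‖ ≤ A * ((b ^ p - a ^ p) / p) := by
  have hB : ∀ x ∈ Icc a b,
      HasDerivAt (fun x => A * ((x ^ p - a ^ p) / p)) (A * x ^ (p - 1)) x := fun x hx =>
    ((((hasDerivAt_rpow_const (Or.inl (ha.trans_le hx.1).ne')).sub_const (a ^ p)).div_const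
      p).const_mul A).congr_deriv (by rw [mul_div_cancel_left₀ _ hp])
  refine image_norm_le_of_norm_deriv_right_le_deriv_boundary' (f := fun x => F x - F a)
    (fun x hx => ((hF x hx).continuousAt.sub continuousAt_const).continuousWithinAt)
    (fun x hx => ((hF x (Ico_subset_Icc_self hx)).sub_const (F a)).hasDerivWithinAt)
    (by simp) (fun x hx => (hB x hx).continuousAt.continuousWithinAt)
    (fun x hx => (hB x (Ico_subset_Icc_self hx)).hasDerivWithinAt)
    (fun x hx => hF' x (Ico_subset_Icc_self hx)) (right_mem_Icc.2 hab)

theorem rpow_le_rpow_mul_rpow_of_le {s e p q : ℝ} (hs : 0 < s) (hse : s ≤ e) (hqp : q ≤ p) :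
    s ^ p ≤ e ^ (p - q) * s ^ q :=
  calc s ^ p = s ^ (p - q) * s ^ q := by rw [← rpow_add hs, sub_add_cancel]
    _ ≤ e ^ (p - q) * s ^ q := by gcongr

noncomputable def diffIneqConst (δ C e K α q : ℝ) : ℝ :=
  C * (e ^ (δ - 1 - q) + K * e ^ (-(1 / 2) - α - q) + √K * e ^ (δ - 3 / 2 - α / 2 - q))

theorem diffIneqConst_nonneg {δ C e K α q : ℝ} (hC : 0 ≤ C) (he : 0 ≤ e) (hK : 0 ≤ K) :
    0 ≤ diffIneqConst δ C e K α q := by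
  unfold diffIneqConst; positivity

theorem diffIneq_rhs_le_const_mul_rpow {δ C K α q s e x : ℝ} (hC : 0 ≤ C) (hδ : δ ≤ 1)
    (hα : 0 ≤ α) (hq : q ≤ δ - 3 / 2 - α) (hs : 0 < s) (hse : s ≤ e) (hx : 0 ≤ x)
    (hxK : x ≤ K * s ^ (-α)) :
    C * (s ^ (δ - 1) + s ^ (-(1 / 2 : ℝ)) * x + s ^ (δ - 3 / 2) * √x) ≤
      diffIneqConst δ C e K α q * s ^ q := by
  have hK : 0 ≤ K := nonneg_of_mul_nonneg_left (hx.trans hxK) (rpow_pos_of_pos hs _)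
  have hsqrt : √x ≤ √K * s ^ (-(α / 2)) :=
    calc √x ≤ √(K * s ^ (-α)) := sqrt_le_sqrt hxK
      _ = √K * s ^ (-(α / 2)) := by
        rw [sqrt_mul hK, sqrt_eq_rpow (s ^ _), ← rpow_mul hs.le]
        ring_nf
  have hmono {a : ℝ} (ha : q ≤ a) : s ^ a ≤ e ^ (a - q) * s ^ q :=
    rpow_le_rpow_mul_rpow_of_le hs hse ha
  have h₂ : s ^ (-(1 / 2 : ℝ)) * x ≤ K * (e ^ (-(1 / 2) - α - q) * s ^ q) :=
    calc s ^ (-(1 / 2 : ℝ)) * x ≤ s ^ (-(1 / 2 : ℝ)) * (K * s ^ (-α)) := by gcongr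
      _ = K * s ^ (-(1 / 2) - α) := by rw [sub_eq_add_neg, rpow_add hs]; ring
      _ ≤ K * (e ^ (-(1 / 2) - α - q) * s ^ q) := by gcongr; exact hmono (by linarith)
  have h₃ : s ^ (δ - 3 / 2) * √x ≤ √K * (e ^ (δ - 3 / 2 - α / 2 - q) * s ^ q) :=
    calc s ^ (δ - 3 / 2) * √x ≤ s ^ (δ - 3 / 2) * (√K * s ^ (-(α / 2))) := by gcongr
      _ = √K * s ^ (δ - 3 / 2 - α / 2) := by rw [sub_eq_add_neg _ (α / 2), rpow_add hs]; ring
      _ ≤ √K * (e ^ (δ - 3 / 2 - α / 2 - q) * s ^ q) := by gcongr; exact hmono (by linarith)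
  calc C * (s ^ (δ - 1) + s ^ (-(1 / 2 : ℝ)) * x + s ^ (δ - 3 / 2) * √x)
      ≤ C * (e ^ (δ - 1 - q) * s ^ q + K * (e ^ (-(1 / 2) - α - q) * s ^ q) +
          √K * (e ^ (δ - 3 / 2 - α / 2 - q) * s ^ q)) := by
        gcongr; exact hmono (by linarith)
    _ = diffIneqConst δ C e K α q * s ^ q := by unfold diffIneqConst; ring

structure SatisfiesDiffIneq (δ C ε₀ : ℝ) (F F' : ℝ → E) : Prop where
  hasDerivAt : ∀ ε ∈ Ioc 0 ε₀, HasDerivAt F (F' ε) ε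
  norm_deriv_le : ∀ ε ∈ Ioc 0 ε₀,
    ‖F' ε‖ ≤ C * (ε ^ (δ - 1) + ε ^ (-(1 / 2 : ℝ)) * ‖F ε‖ + ε ^ (δ - 3 / 2) * √‖F ε‖)

namespace SatisfiesDiffIneq

variable {δ C ε₀ K α ε : ℝ} {F F' : ℝ → E}

theorem norm_le_add_of_norm_le_mul_rpow (h : SatisfiesDiffIneq δ C ε₀ F F') (hC : 0 ≤ C)
    (hδ : δ ≤ 1) (hα : 0 ≤ α) (hFK : ∀ ε ∈ Ioc 0 ε₀, ‖F ε‖ ≤ K * ε ^ (-α)) {p : ℝ}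
    (hp : p ≤ δ - 1 / 2 - α) (hp₀ : p ≠ 0) (hε : ε ∈ Ioc 0 ε₀) :
    ‖F ε‖ ≤ K * ε₀ ^ (-α) + diffIneqConst δ C ε₀ K α (p - 1) * ((ε₀ ^ p - ε ^ p) / p) := by
  have hε₀ : ε₀ ∈ Ioc 0 ε₀ := ⟨hε.1.trans_le hε.2, le_rfl⟩
  have hIcc : ∀ x ∈ Icc ε ε₀, x ∈ Ioc 0 ε₀ := fun x hx => ⟨hε.1.trans_le hx.1, hx.2⟩
  have hdiff := norm_sub_le_of_norm_deriv_le_rpow hε.1 hε.2 hp₀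
    (fun x hx => h.hasDerivAt x (hIcc x hx)) fun x hx =>
      (h.norm_deriv_le x (hIcc x hx)).trans <| diffIneq_rhs_le_const_mul_rpow hC hδ hα
        (by linarith) (hIcc x hx).1 hx.2 (norm_nonneg _) (hFK x (hIcc x hx))
  calc ‖F ε‖ ≤ ‖F ε₀‖ + ‖F ε₀ - F ε‖ := norm_le_norm_add_norm_sub _ _
    _ ≤ _ := add_le_add (hFK ε₀ hε₀) hdiff

theorem norm_le_mul_rpow_of_norm_le_mul_rpow (h : SatisfiesDiffIneq δ C ε₀ F F') (hC : 0 ≤ C)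
    (hδ : δ ≤ 1) (hα : 0 ≤ α) (hFK : ∀ ε ∈ Ioc 0 ε₀, ‖F ε‖ ≤ K * ε ^ (-α)) {β : ℝ} (hβ : 0 < β)
    (hαβ : α - β ≤ δ - 1 / 2) (hε : ε ∈ Ioc 0 ε₀) :
    ‖F ε‖ ≤ (K * ε₀ ^ (β - α) + diffIneqConst δ C ε₀ K α (-β - 1) / β) * ε ^ (-β) := by
  have hε₀ : 0 < ε₀ := hε.1.trans_le hε.2
  have hK : 0 ≤ K := nonneg_of_mul_nonneg_left
    ((norm_nonneg _).trans (hFK ε₀ ⟨hε₀, le_rfl⟩)) (rpow_pos_of_pos hε₀ _)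
  set A := diffIneqConst δ C ε₀ K α (-β - 1)
  have hA : 0 ≤ A := diffIneqConst_nonneg hC hε₀.le hK
  have hsplit : ε₀ ^ (-α) = ε₀ ^ (β - α) * ε₀ ^ (-β) := by rw [← rpow_add hε₀]; ring_nf
  calc ‖F ε‖ ≤ K * ε₀ ^ (-α) + A * ((ε₀ ^ (-β) - ε ^ (-β)) / -β) :=
        h.norm_le_add_of_norm_le_mul_rpow hC hδ hα hFK (by linarith) (by linarith) hε
    _ = K * ε₀ ^ (β - α) * ε₀ ^ (-β) + A / β * (ε ^ (-β) - ε₀ ^ (-β)) := by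
        rw [hsplit]; field_simp; ring
    _ ≤ K * ε₀ ^ (β - α) * ε ^ (-β) + A / β * ε ^ (-β) := by
        have hpow : ε₀ ^ (-β) ≤ ε ^ (-β) := rpow_le_rpow_of_nonpos hε.1 hε.2 (by linarith)
        have hpos : 0 ≤ ε₀ ^ (-β) := rpow_nonneg hε₀.le _
        exact add_le_add (mul_le_mul_of_nonneg_left hpow (by positivity))
          (mul_le_mul_of_nonneg_left (by linarith) (by positivity))
    _ = _ := by ring

theorem norm_le_const_of_norm_le_mul_rpow (h : SatisfiesDiffIneq δ C ε₀ F F') (hC : 0 ≤ C)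
    (hδ : δ ≤ 1) (hα : 0 ≤ α) (hFK : ∀ ε ∈ Ioc 0 ε₀, ‖F ε‖ ≤ K * ε ^ (-α)) (hαδ : α < δ - 1 / 2)
    (hε : ε ∈ Ioc 0 ε₀) :
    ‖F ε‖ ≤ K * ε₀ ^ (-α) + diffIneqConst δ C ε₀ K α (δ - 3 / 2 - α) *
      (ε₀ ^ (δ - 1 / 2 - α) / (δ - 1 / 2 - α)) := by
  have hp : 0 < δ - 1 / 2 - α := by linarith
  have hε₀ : 0 < ε₀ := hε.1.trans_le hε.2
  have hK : 0 ≤ K := nonneg_of_mul_nonneg_left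
    ((norm_nonneg _).trans (hFK ε₀ ⟨hε₀, le_rfl⟩)) (rpow_pos_of_pos hε₀ _)
  calc ‖F ε‖ ≤ _ := h.norm_le_add_of_norm_le_mul_rpow hC hδ hα hFK le_rfl hp.ne' hε
    _ ≤ _ := by
      rw [show δ - 1 / 2 - α - 1 = δ - 3 / 2 - α by ring]
      gcongr
      · exact diffIneqConst_nonneg hC hε₀.le hK
      · linarith [rpow_nonneg hε.1.le (δ - 1 / 2 - α)]

end SatisfiesDiffIneq

variable (E) in
theorem exists_uniform_rpow_bound {δ C ε₀ θ : ℝ} (hC : 0 ≤ C) (hδ : δ ≤ 1) (hθ : 0 < θ)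
    (hθδ : θ ≤ δ - 1 / 2) :
    ∃ K, ∀ F F' : ℝ → E, SatisfiesDiffIneq δ C ε₀ F F' → (∀ ε ∈ Ioc 0 ε₀, ‖F ε‖ ≤ C / ε) →
      ∀ ε ∈ Ioc 0 ε₀, ‖F ε‖ ≤ K * ε ^ (-θ) := by
  have hiter (n : ℕ) : ∃ K, ∀ F F' : ℝ → E, SatisfiesDiffIneq δ C ε₀ F F' →
      (∀ ε ∈ Ioc 0 ε₀, ‖F ε‖ ≤ C / ε) →
      ∀ ε ∈ Ioc 0 ε₀, ‖F ε‖ ≤ K * ε ^ (-max (1 - n * θ) θ) := by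
    induction n with
    | zero =>
      refine ⟨C, fun F F' _ hB ε hε => ?_⟩
      rw [Nat.cast_zero, zero_mul, sub_zero, max_eq_left (by linarith), rpow_neg_one,
        ← div_eq_mul_inv]
      exact hB ε hε
    | succ n ih =>
      obtain ⟨K, hK⟩ := ih
      have hdrop : max (1 - n * θ) θ ≤ max (1 - (n + 1 : ℕ) * θ) θ + θ := by
        push_cast
        exact max_le (by linarith [le_max_left (1 - (n + 1) * θ) θ])
          (by linarith [le_max_right (1 - (n + 1) * θ) θ])
      exact ⟨_, fun F F' h hB ε hε => h.norm_le_mul_rpow_of_norm_le_mul_rpow hC hδ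
        (hθ.le.trans (le_max_right _ _)) (hK F F' h hB) (hθ.trans_le (le_max_right _ _))
        (by linarith) hε⟩
  obtain ⟨n, hn⟩ := exists_nat_ge θ⁻¹
  have hmax : max (1 - n * θ) θ = θ :=
    max_eq_right (by linarith [(inv_le_iff_one_le_mul₀ hθ).1 hn])
  simpa only [hmax] using hiter n

end

theorem stmt_17_general {H : Type*} [NormedAddCommGroup H] [InnerProductSpace ℂ H]
    (δ C ε₀ : ℝ) (hδ : δ ∈ Set.Ioc (1 / 2 : ℝ) 1) (hC : 0 < C) :
    ∃ M : ℝ, ∀ F F' : ℝ → (H →L[ℂ] H),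
      (∀ ε ∈ Set.Ioc (0 : ℝ) ε₀, HasDerivAt F (F' ε) ε) →
      (∀ ε ∈ Set.Ioc (0 : ℝ) ε₀, ‖F ε‖ ≤ C / ε) →
      (∀ ε ∈ Set.Ioc (0 : ℝ) ε₀, ‖F' ε‖ ≤
        C * (ε ^ (δ - 1) + ε ^ (-(1 / 2 : ℝ)) * ‖F ε‖ +
          ε ^ (δ - 3 / 2) * Real.sqrt ‖F ε‖)) →
      ∀ ε ∈ Set.Ioc (0 : ℝ) ε₀, ‖F ε‖ ≤ M := by
  obtain ⟨hδ₁, hδ₂⟩ := hδ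
  obtain ⟨K, hK⟩ := exists_uniform_rpow_bound (H →L[ℂ] H) (ε₀ := ε₀) hC.le hδ₂
    (θ := (δ - 1 / 2) / 2) (by linarith) (by linarith)
  exact ⟨_, fun F F' hD hB hDB ε hε =>
    (SatisfiesDiffIneq.mk hD hDB).norm_le_const_of_norm_le_mul_rpow hC.le hδ₂ (by linarith)
      (hK F F' ⟨hD, hDB⟩ hB) (by linarith) hε⟩

/-- differential-inequality bootstrap, Lemma 3.3 of [JMP84].
If a `C¹` family `F : (0, ε₀] → L(H)` satisfies `‖F(ε)‖ ≤ C/ε` and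
`‖F'(ε)‖ ≤ C (ε^{δ-1} + ε^{-1/2} ‖F(ε)‖ + ε^{δ-3/2} ‖F(ε)‖^{1/2})` with `δ ∈ (1/2, 1]`,
then `‖F(ε)‖` is bounded uniformly in `ε`, with a bound depending only on `C, δ, ε₀`. -/
theorem stmt_17 {H : Type*} [NormedAddCommGroup H] [InnerProductSpace ℂ H] [CompleteSpace H]
    (δ C ε₀ : ℝ) (hδ : δ ∈ Set.Ioc (1 / 2 : ℝ) 1) (hC : 0 < C) (hε₀ : 0 < ε₀) :
    ∃ M : ℝ, ∀ F F' : ℝ → (H →L[ℂ] H),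
      (∀ ε ∈ Set.Ioc (0 : ℝ) ε₀, HasDerivAt F (F' ε) ε) →
      (∀ ε ∈ Set.Ioc (0 : ℝ) ε₀, ‖F ε‖ ≤ C / ε) →
      (∀ ε ∈ Set.Ioc (0 : ℝ) ε₀, ‖F' ε‖ ≤
        C * (ε ^ (δ - 1) + ε ^ (-(1 / 2 : ℝ)) * ‖F ε‖ +
          ε ^ (δ - 3 / 2) * Real.sqrt ‖F ε‖)) →
      ∀ ε ∈ Set.Ioc (0 : ℝ) ε₀, ‖F ε‖ ≤ M :=
  stmt_17_general δ C ε₀ hδ hC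
end
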